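/- The map θ : ℝ^{N+1} × ℝ^{N+1} → S_0 that sends (y, z) = ((y_0,…,y_N), (z_0,…,z_N)) to f = (f_1, f_2), where f_1 is the unique CHFIF passing through the points (x_i, y_i) and f_2 is the unique AFIF passing through the points (x_i, z_i), i = 0,…,N, is a linear isomorphism; in particular, the dimension of the vector space S_0 equals 2(N+1). -/

import Mathlib

open Set

/-- The affine contractive homeomorphism `L n` mapping `I = [x 0, x N]` onto the
`n`-th subinterval. -/
noncomputable def LMap {N : ℕ} (x : Fin (N + 1) → ℝ) (n : Fin N) (u : ℝ) : ℝ :=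
  ((x n.succ - x n.castSucc) / (x (Fin.last N) - x 0)) * u +
    (x (Fin.last N) * x n.castSucc - x 0 * x n.succ) / (x (Fin.last N) - x 0)

/-- `f` is a fixed point of the operator `Φ_t`:  for every `n` and `u ∈ I`,
`f (L_n u) = F_n (u, f u)` where `F_n (u, y, z) = (α_n y + β_n z + p_n u, γ_n z + q_n u)`,
the linear polynomials being `p_n u = (t n).1.1 * u + (t n).1.2` and
`q_n u = (t n).2.1 * u + (t n).2.2`. -/
def FixEq {N : ℕ} (x : Fin (N + 1) → ℝ) (α β γ : Fin N → ℝ)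
    (t : Fin N → (ℝ × ℝ) × (ℝ × ℝ)) (f : ℝ → ℝ × ℝ) : Prop :=
  ∀ n : Fin N, ∀ u ∈ Icc (x 0) (x (Fin.last N)),
    f (LMap x n u) =
      (α n * (f u).1 + β n * (f u).2 + ((t n).1.1 * u + (t n).1.2),
       γ n * (f u).2 + ((t n).2.1 * u + (t n).2.2))

/-- `f` belongs to `B(I, ℝ²)`, the set of bounded functions on `I = [x 0, x N]`. -/
def BddOnI {N : ℕ} (x : Fin (N + 1) → ℝ) (f : ℝ → ℝ × ℝ) : Prop :=
  ∃ M : ℝ, ∀ u ∈ Icc (x 0) (x (Fin.last N)), ‖f u‖ ≤ M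

/-- The space `S₀` of pairs `f = (f₁, f₂)` where `f₁` is a CHFIF and `f₂` an AFIF
for some interpolation data over the fixed partition and parameters; members are
extended by `0` outside `I = [x 0, x N]`. -/
def S0set {N : ℕ} (x : Fin (N + 1) → ℝ) (α β γ : Fin N → ℝ) : Set (ℝ → ℝ × ℝ) :=
  {f | ContinuousOn f (Icc (x 0) (x (Fin.last N))) ∧
       (∀ u ∉ Icc (x 0) (x (Fin.last N)), f u = 0) ∧
       ∃ t : Fin N → (ℝ × ℝ) × (ℝ × ℝ), FixEq x α β γ t f}

/-!
Under the join-up conditions, a scalar equation `g ∘ L n = s n * g + h n` with `|s n| < 1` has a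
continuous solution through prescribed nodal values: the fixed point of the Read–Bajraktarević
operator, a contraction on the continuous functions with the prescribed endpoint values. Solving
first for `f₂` (with `s = γ`, `h = q`) and then for `f₁` (with `s = α`, `h = β f₂ + p`) gives an
element of `S₀` with any nodal values. Conversely, an element of `S₀` vanishing at the nodes has
`p n = q n = 0`, and a continuous solution of `d ∘ L n = s n * d` vanishes, since `|d|` at its
maximum `L n u` is `|s n| |d u|`. So evaluation at the nodes is a linear bijection from `S₀` onto
`ℝ^{N+1} × ℝ^{N+1}`, and `θ` is its inverse.
-/

variable {N : ℕ} {x : Fin (N + 1) → ℝ}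

noncomputable def LMapInv (x : Fin (N + 1) → ℝ) (n : Fin N) (v : ℝ) : ℝ :=
  x 0 + (v - x n.castSucc) * (x (Fin.last N) - x 0) / (x n.succ - x n.castSucc)

section Subintervals

variable (hx : StrictMono x)
include hx

lemma StrictMono.apply_zero_lt_apply_last (n : Fin N) : x 0 < x (Fin.last N) :=
  hx ((Fin.zero_le n.castSucc).trans_lt (Fin.castSucc_lt_last n))

lemma LMap_zero (n : Fin N) : LMap x n (x 0) = x n.castSucc := by
  have := (sub_pos.2 (hx.apply_zero_lt_apply_last n)).ne'
  unfold LMap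
  field_simp
  ring

lemma LMap_last (n : Fin N) : LMap x n (x (Fin.last N)) = x n.succ := by
  have := (sub_pos.2 (hx.apply_zero_lt_apply_last n)).ne'
  unfold LMap
  field_simp
  ring

lemma LMapInv_LMap (n : Fin N) (u : ℝ) : LMapInv x n (LMap x n u) = u := by
  have := (sub_pos.2 (hx.apply_zero_lt_apply_last n)).ne'
  have := (sub_pos.2 (hx (Fin.castSucc_lt_succ (i := n)))).ne'
  unfold LMapInv LMap
  field_simp
  ring

lemma LMap_LMapInv (n : Fin N) (v : ℝ) : LMap x n (LMapInv x n v) = v := by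
  have := (sub_pos.2 (hx.apply_zero_lt_apply_last n)).ne'
  have := (sub_pos.2 (hx (Fin.castSucc_lt_succ (i := n)))).ne'
  unfold LMapInv LMap
  field_simp
  ring

lemma strictMono_LMap (n : Fin N) : StrictMono (LMap x n) := fun _ _ huv =>
  add_lt_add_left (mul_lt_mul_of_pos_left huv (div_pos
    (sub_pos.2 (hx Fin.castSucc_lt_succ)) (sub_pos.2 (hx.apply_zero_lt_apply_last n)))) _

lemma LMap_mem_Icc (n : Fin N) {u : ℝ} (hu : u ∈ Icc (x 0) (x (Fin.last N))) :
    LMap x n u ∈ Icc (x n.castSucc) (x n.succ) := by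
  rw [← LMap_zero hx, ← LMap_last hx]
  exact (strictMono_LMap hx n).monotone.mapsTo_Icc hu

lemma LMapInv_mem_Icc (n : Fin N) {v : ℝ} (hv : v ∈ Icc (x n.castSucc) (x n.succ)) :
    LMapInv x n v ∈ Icc (x 0) (x (Fin.last N)) := by
  have hL := strictMono_LMap hx n
  constructor
  · rw [← hL.le_iff_le, LMap_zero hx, LMap_LMapInv hx]
    exact hv.1
  · rw [← hL.le_iff_le, LMap_last hx, LMap_LMapInv hx]
    exact hv.2

lemma Icc_castSucc_succ_subset (n : Fin N) :
    Icc (x n.castSucc) (x n.succ) ⊆ Icc (x 0) (x (Fin.last N)) :=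
  Icc_subset_Icc (hx.monotone (Fin.zero_le _)) (hx.monotone (Fin.le_last _))

lemma iUnion_Icc_castSucc_succ (hN : 1 ≤ N) :
    ⋃ n : Fin N, Icc (x n.castSucc) (x n.succ) = Icc (x 0) (x (Fin.last N)) := by
  refine Subset.antisymm (iUnion_subset (Icc_castSucc_succ_subset hx)) fun v hv => ?_
  obtain ⟨M, rfl⟩ := Nat.exists_eq_add_of_le' hN
  by_contra! hcov
  simp only [mem_iUnion, mem_Icc, not_exists, not_and, not_le] at hcov
  have hbeyond : ∀ k (hk : k < M + 2), x ⟨k, hk⟩ ≤ v := by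
    intro k
    induction k with
    | zero => exact fun _ => hv.1
    | succ k ih => exact fun hk => (hcov ⟨k, by omega⟩ (ih (by omega))).le
  exact (hcov ⟨M, by omega⟩ (hbeyond M (by omega))).not_ge hv.2

lemma exists_mem_Icc_castSucc_succ (hN : 1 ≤ N) {v : ℝ}
    (hv : v ∈ Icc (x 0) (x (Fin.last N))) :
    ∃ n : Fin N, v ∈ Icc (x n.castSucc) (x n.succ) :=
  mem_iUnion.1 ((iUnion_Icc_castSucc_succ hx hN).symm ▸ hv)

lemma exists_LMap_eq (hN : 1 ≤ N) {v : ℝ} (hv : v ∈ Icc (x 0) (x (Fin.last N))) :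
    ∃ n : Fin N, ∃ u ∈ Icc (x 0) (x (Fin.last N)), LMap x n u = v := by
  obtain ⟨n, hn⟩ := exists_mem_Icc_castSucc_succ hx hN hv
  exact ⟨n, LMapInv x n v, LMapInv_mem_Icc hx n hn, LMap_LMapInv hx n v⟩

end Subintervals

lemma StrictMono.mem_Icc_zero_last (hx : StrictMono x) (i : Fin (N + 1)) :
    x i ∈ Icc (x 0) (x (Fin.last N)) :=
  ⟨hx.monotone (Fin.zero_le i), hx.monotone (Fin.le_last i)⟩

section Gluing

open Classical in
noncomputable def gluePieces (x : Fin (N + 1) → ℝ) (P : Fin N → ℝ → ℝ) (v : ℝ) : ℝ :=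
  if h : ∃ n : Fin N, v ∈ Icc (x n.castSucc) (x n.succ) then P h.choose v else 0

lemma exists_gluePieces_eq {v : ℝ} (hv : ∃ n : Fin N, v ∈ Icc (x n.castSucc) (x n.succ)) :
    ∃ n : Fin N, v ∈ Icc (x n.castSucc) (x n.succ) ∧ ∀ P, gluePieces x P v = P n v :=
  ⟨hv.choose, hv.choose_spec, fun _ => dif_pos hv⟩

variable (x) in
def PiecesAgree (P : Fin N → ℝ → ℝ) : Prop :=
  ∀ n m v, v ∈ Icc (x n.castSucc) (x n.succ) → v ∈ Icc (x m.castSucc) (x m.succ) → P n v = P m v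

variable {P : Fin N → ℝ → ℝ}

lemma gluePieces_eq (hP : PiecesAgree x P) {n : Fin N} {v : ℝ}
    (hv : v ∈ Icc (x n.castSucc) (x n.succ)) : gluePieces x P v = P n v := by
  obtain ⟨m, hm, hglue⟩ := exists_gluePieces_eq ⟨n, hv⟩
  rw [hglue, hP m n v hm hv]

lemma continuousOn_gluePieces (hx : StrictMono x) (hN : 1 ≤ N) (hP : PiecesAgree x P)
    (hc : ∀ n, ContinuousOn (P n) (Icc (x n.castSucc) (x n.succ))) :
    ContinuousOn (gluePieces x P) (Icc (x 0) (x (Fin.last N))) := by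
  rw [← iUnion_Icc_castSucc_succ hx hN]
  exact (locallyFinite_of_finite _).continuousOn_iUnion (fun _ => isClosed_Icc)
    fun n => (hc n).congr fun _ hv => gluePieces_eq hP hv

lemma piecesAgree_of_apply_nodes (hx : StrictMono x) {y : Fin (N + 1) → ℝ}
    (hleft : ∀ n, P n (x n.castSucc) = y n.castSucc) (hright : ∀ n, P n (x n.succ) = y n.succ) :
    PiecesAgree x P := by
  intro n m v hn hm
  wlog hlt : n < m generalizing n m
  · rcases (not_lt.1 hlt).eq_or_lt with rfl | hgt
    · rfl
    · exact (this m n hm hn hgt).symm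
  have hle : x n.succ ≤ x m.castSucc := hx.monotone (Fin.succ_le_castSucc_iff.2 hlt)
  have hvn : v = x n.succ := le_antisymm hn.2 (hle.trans hm.1)
  have hvm : v = x m.castSucc := le_antisymm (hn.2.trans hle) hm.1
  have hnm : n.succ = m.castSucc := hx.injective (hvn.symm.trans hvm)
  rw [hvn, hright, hnm]
  exact (hleft m).symm

end Gluing

section ReadBajraktarevic

variable (x) in
def JoinUp (s : Fin N → ℝ) (h : Fin N → ℝ → ℝ) (y : Fin (N + 1) → ℝ) : Prop :=
  ∀ n, s n * y 0 + h n (x 0) = y n.castSucc ∧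
    s n * y (Fin.last N) + h n (x (Fin.last N)) = y n.succ

variable (x) in
noncomputable def readBajraktarevic (s : Fin N → ℝ) (h : Fin N → ℝ → ℝ) (G : ℝ → ℝ) :
    ℝ → ℝ :=
  gluePieces x fun n v => s n * G (LMapInv x n v) + h n (LMapInv x n v)

variable {s : Fin N → ℝ} {h : Fin N → ℝ → ℝ} {y : Fin (N + 1) → ℝ} {G : ℝ → ℝ}

section JoinUp

variable (hx : StrictMono x) (hjoin : JoinUp x s h y) (hG0 : G (x 0) = y 0)
  (hGN : G (x (Fin.last N)) = y (Fin.last N))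
include hx hjoin hG0 hGN

lemma readBajraktarevic_eq {n : Fin N} {v : ℝ} (hv : v ∈ Icc (x n.castSucc) (x n.succ)) :
    readBajraktarevic x s h G v = s n * G (LMapInv x n v) + h n (LMapInv x n v) := by
  refine gluePieces_eq (piecesAgree_of_apply_nodes hx (y := y) (fun n => ?_) (fun n => ?_)) hv
  · rw [← LMap_zero hx, LMapInv_LMap hx, hG0, (hjoin n).1]
  · rw [← LMap_last hx, LMapInv_LMap hx, hGN, (hjoin n).2]

lemma readBajraktarevic_LMap (n : Fin N) {u : ℝ} (hu : u ∈ Icc (x 0) (x (Fin.last N))) :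
    readBajraktarevic x s h G (LMap x n u) = s n * G u + h n u := by
  rw [readBajraktarevic_eq hx hjoin hG0 hGN (LMap_mem_Icc hx n hu), LMapInv_LMap hx]

lemma readBajraktarevic_apply_node (hN : 1 ≤ N) (i : Fin (N + 1)) :
    readBajraktarevic x s h G (x i) = y i := by
  induction i using Fin.cases with
  | zero =>
    have := readBajraktarevic_LMap hx hjoin hG0 hGN ⟨0, hN⟩ (hx.mem_Icc_zero_last 0)
    rwa [LMap_zero hx, hG0, (hjoin _).1] at this
  | succ n =>
    have := readBajraktarevic_LMap hx hjoin hG0 hGN n (hx.mem_Icc_zero_last (Fin.last N))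
    rwa [LMap_last hx, hGN, (hjoin n).2] at this

lemma continuousOn_readBajraktarevic (hN : 1 ≤ N)
    (hG : ContinuousOn G (Icc (x 0) (x (Fin.last N))))
    (hh : ∀ n, ContinuousOn (h n) (Icc (x 0) (x (Fin.last N)))) :
    ContinuousOn (readBajraktarevic x s h G) (Icc (x 0) (x (Fin.last N))) := by
  refine continuousOn_gluePieces hx hN (fun n m v hn hm => ?_) fun n => ?_
  · rw [← readBajraktarevic_eq hx hjoin hG0 hGN hn, readBajraktarevic_eq hx hjoin hG0 hGN hm]
  · have hinv : ContinuousOn (LMapInv x n) (Icc (x n.castSucc) (x n.succ)) := by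
      unfold LMapInv
      fun_prop
    have hmaps : MapsTo (LMapInv x n) _ _ := fun _ hv => LMapInv_mem_Icc hx n hv
    exact (continuousOn_const.mul (hG.comp hinv hmaps)).add ((hh n).comp hinv hmaps)

end JoinUp

lemma abs_readBajraktarevic_sub_le (hx : StrictMono x) (hN : 1 ≤ N) {c D : ℝ}
    (hc : ∀ n, |s n| ≤ c) {G' : ℝ → ℝ}
    (hGG' : ∀ u ∈ Icc (x 0) (x (Fin.last N)), |G u - G' u| ≤ D)
    {v : ℝ} (hv : v ∈ Icc (x 0) (x (Fin.last N))) :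
    |readBajraktarevic x s h G v - readBajraktarevic x s h G' v| ≤ c * D := by
  obtain ⟨n, hn, hglue⟩ := exists_gluePieces_eq (exists_mem_Icc_castSucc_succ hx hN hv)
  have hu := LMapInv_mem_Icc hx n hn
  simp only [readBajraktarevic, hglue, add_sub_add_right_eq_sub, ← mul_sub, abs_mul]
  exact mul_le_mul (hc n) (hGG' _ hu) (abs_nonneg _) ((abs_nonneg _).trans (hc n))

end ReadBajraktarevic

lemma exists_abs_le_lt_one {ι : Type*} [Finite ι] [Nonempty ι] {s : ι → ℝ}
    (hs : ∀ i, |s i| < 1) : ∃ c, 0 ≤ c ∧ c < 1 ∧ ∀ i, |s i| ≤ c := by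
  obtain ⟨i₀, hi₀⟩ := Finite.exists_max fun i => |s i|
  exact ⟨|s i₀|, abs_nonneg _, hs i₀, hi₀⟩

noncomputable def lineCoeffs (a b A B : ℝ) : ℝ × ℝ :=
  ((B - A) / (b - a), (A * b - B * a) / (b - a))

lemma lineCoeffs_left {a b : ℝ} (hab : a ≠ b) (A B : ℝ) :
    (lineCoeffs a b A B).1 * a + (lineCoeffs a b A B).2 = A := by
  have := sub_ne_zero.2 hab.symm
  simp only [lineCoeffs]
  field_simp
  ring

lemma lineCoeffs_right {a b : ℝ} (hab : a ≠ b) (A B : ℝ) :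
    (lineCoeffs a b A B).1 * b + (lineCoeffs a b A B).2 = B := by
  have := sub_ne_zero.2 hab.symm
  simp only [lineCoeffs]
  field_simp
  ring

lemma affine_eq_zero_of_two_zeros {a b p q : ℝ} (hpq : p ≠ q) (hp : a * p + b = 0)
    (hq : a * q + b = 0) (u : ℝ) : a * u + b = 0 := by
  obtain rfl : a = 0 :=
    (mul_eq_zero.1 (by linear_combination hp - hq : a * (p - q) = 0)).resolve_right
      (sub_ne_zero.2 hpq)
  simpa using hp

section FractalInterpolant

variable {s : Fin N → ℝ} {h : Fin N → ℝ → ℝ} {y : Fin (N + 1) → ℝ}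
variable (hx : StrictMono x) (hN : 1 ≤ N) (hs : ∀ n, |s n| < 1)
include hx hN hs

theorem exists_eqOn_readBajraktarevic
    (hh : ∀ n, ContinuousOn (h n) (Icc (x 0) (x (Fin.last N)))) (hjoin : JoinUp x s h y) :
    ∃ G : ℝ → ℝ, ContinuousOn G (Icc (x 0) (x (Fin.last N))) ∧ G (x 0) = y 0 ∧
      G (x (Fin.last N)) = y (Fin.last N) ∧
      EqOn (readBajraktarevic x s h G) G (Icc (x 0) (x (Fin.last N))) := by
  have hlt := hx.apply_zero_lt_apply_last ⟨0, hN⟩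
  let X : Set C(Icc (x 0) (x (Fin.last N)), ℝ) :=
    {g | g ⟨x 0, left_mem_Icc.2 hlt.le⟩ = y 0 ∧
      g ⟨x (Fin.last N), right_mem_Icc.2 hlt.le⟩ = y (Fin.last N)}
  have : CompleteSpace X :=
    ((isClosed_eq (continuous_eval_const _) continuous_const).inter
      (isClosed_eq (continuous_eval_const _) continuous_const)).completeSpace_coe
  let ℓ := lineCoeffs (x 0) (x (Fin.last N)) (y 0) (y (Fin.last N))
  have : Nonempty X := ⟨⟨⟨fun u => ℓ.1 * u + ℓ.2, by fun_prop⟩,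
    lineCoeffs_left hlt.ne _ _, lineCoeffs_right hlt.ne _ _⟩⟩
  let ext : X → ℝ → ℝ := fun g => IccExtend hlt.le g.1
  have hext_mem (g : X) {u} (hu : u ∈ Icc (x 0) (x (Fin.last N))) : ext g u = g.1 ⟨u, hu⟩ :=
    IccExtend_of_mem _ _ hu
  have hext : ∀ g : X, ext g (x 0) = y 0 ∧ ext g (x (Fin.last N)) = y (Fin.last N) :=
    fun g => ⟨(IccExtend_left hlt.le _).trans g.2.1, (IccExtend_right hlt.le _).trans g.2.2⟩
  let Φ : X → X := fun g =>
    ⟨⟨(Icc _ _).domRestrict (readBajraktarevic x s h (ext g)),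
      (continuousOn_readBajraktarevic hx hjoin (hext g).1 (hext g).2 hN
        (g.1.continuous.Icc_extend'.continuousOn) hh).domRestrict⟩,
      readBajraktarevic_apply_node hx hjoin (hext g).1 (hext g).2 hN 0,
      readBajraktarevic_apply_node hx hjoin (hext g).1 (hext g).2 hN (Fin.last N)⟩
  have : Nonempty (Fin N) := ⟨⟨0, hN⟩⟩
  obtain ⟨c, hc0, hc1, hc⟩ := exists_abs_le_lt_one hs
  have hΦ : ContractingWith ⟨c, hc0⟩ Φ := by
    refine ⟨hc1, LipschitzWith.of_dist_le_mul fun g g' => ?_⟩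
    rw [Subtype.dist_eq, Subtype.dist_eq, ContinuousMap.dist_le (by positivity)]
    intro v
    refine abs_readBajraktarevic_sub_le hx hN hc (fun u hu => ?_) v.2
    rw [hext_mem g hu, hext_mem g' hu, ← Real.dist_eq]
    exact ContinuousMap.dist_apply_le_dist _
  let g := ContractingWith.fixedPoint Φ hΦ
  refine ⟨ext g, g.1.continuous.Icc_extend'.continuousOn, (hext g).1, (hext g).2,
    fun v hv => ?_⟩
  have hfix := congrArg (fun g : X => g.1 ⟨v, hv⟩) hΦ.fixedPoint_isFixedPt
  rwa [hext_mem g hv]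

theorem exists_fractalInterpolant
    (hh : ∀ n, ContinuousOn (h n) (Icc (x 0) (x (Fin.last N)))) (hjoin : JoinUp x s h y) :
    ∃ g : ℝ → ℝ, ContinuousOn g (Icc (x 0) (x (Fin.last N))) ∧ (∀ i, g (x i) = y i) ∧
      ∀ n, ∀ u ∈ Icc (x 0) (x (Fin.last N)), g (LMap x n u) = s n * g u + h n u := by
  obtain ⟨G, hGc, hG0, hGN, hfix⟩ := exists_eqOn_readBajraktarevic hx hN hs hh hjoin
  refine ⟨G, hGc, fun i => ?_, fun n u hu => ?_⟩
  · rw [← hfix (hx.mem_Icc_zero_last i), readBajraktarevic_apply_node hx hjoin hG0 hGN hN]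
  · rw [← hfix (Icc_castSucc_succ_subset hx n (LMap_mem_Icc hx n hu)),
      readBajraktarevic_LMap hx hjoin hG0 hGN n hu]

omit hs in
theorem eqOn_zero_of_apply_LMap {s : Fin N → ℝ} (hs : ∀ n, |s n| < 1) {d : ℝ → ℝ}
    (hd : ContinuousOn d (Icc (x 0) (x (Fin.last N))))
    (hdL : ∀ n, ∀ u ∈ Icc (x 0) (x (Fin.last N)), d (LMap x n u) = s n * d u) :
    EqOn d 0 (Icc (x 0) (x (Fin.last N))) := by
  obtain ⟨v₀, hv₀, hmax⟩ := isCompact_Icc.exists_isMaxOn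
    (nonempty_Icc.2 (hx.apply_zero_lt_apply_last ⟨0, hN⟩).le) (continuous_abs.comp_continuousOn hd)
  have hzero : |d v₀| = 0 := by
    obtain ⟨n, u, hu, rfl⟩ := exists_LMap_eq hx hN hv₀
    have hle : |d u| ≤ |d (LMap x n u)| := hmax hu
    rw [hdL n u hu, abs_mul] at hle ⊢
    nlinarith [abs_nonneg (d u), abs_nonneg (s n), hs n]
  intro v hv
  have hle : |d v| ≤ |d v₀| := hmax hv
  rw [hzero] at hle
  exact abs_nonpos_iff.1 hle

end FractalInterpolant

section S0

variable {α β γ : Fin N → ℝ} {t t' : Fin N → (ℝ × ℝ) × (ℝ × ℝ)} {f g : ℝ → ℝ × ℝ}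

lemma FixEq.add (hf : FixEq x α β γ t f) (hg : FixEq x α β γ t' g) :
    FixEq x α β γ (t + t') (f + g) := by
  intro n u hu
  simp only [Pi.add_apply, hf n u hu, hg n u hu, Prod.mk_add_mk, Prod.fst_add, Prod.snd_add]
  congr 1 <;> ring

lemma FixEq.smul (a : ℝ) (hf : FixEq x α β γ t f) : FixEq x α β γ (a • t) (a • f) := by
  intro n u hu
  simp only [Pi.smul_apply, hf n u hu, Prod.smul_mk, Prod.smul_fst, Prod.smul_snd, smul_eq_mul]
  congr 1 <;> ring

lemma fixEq_zero : FixEq x α β γ 0 0 := fun _ _ _ => Prod.ext (by simp) (by simp)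

variable (x α β γ) in
def S0submodule : Submodule ℝ (ℝ → ℝ × ℝ) where
  carrier := S0set x α β γ
  add_mem' := by
    rintro f g ⟨hfc, hf0, t, hft⟩ ⟨hgc, hg0, t', hgt⟩
    exact ⟨hfc.add hgc, fun u hu => by simp [hf0 u hu, hg0 u hu], t + t', hft.add hgt⟩
  zero_mem' := ⟨continuousOn_const, fun _ _ => rfl, 0, fixEq_zero⟩
  smul_mem' := by
    rintro a f ⟨hfc, hf0, t, hft⟩
    exact ⟨hfc.const_smul a, fun u hu => by simp [hf0 u hu], a • t, hft.smul a⟩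

variable (hx : StrictMono x) (hN : 1 ≤ N) (hα : ∀ n, |α n| < 1) (hγ : ∀ n, |γ n| < 1)
include hx hN hα hγ

theorem eq_zero_of_mem_S0set (hf : f ∈ S0set x α β γ) (hnodes : ∀ i, f (x i) = 0) : f = 0 := by
  obtain ⟨hfc, hf0, t, hft⟩ := hf
  have hne := (hx.apply_zero_lt_apply_last ⟨0, hN⟩).ne
  have hlin : ∀ n u, ((t n).1.1 * u + (t n).1.2 = 0) ∧ (t n).2.1 * u + (t n).2.2 = 0 := by
    intro n u
    have hfirst := hft n (x 0) (hx.mem_Icc_zero_last 0)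
    have hlast := hft n (x (Fin.last N)) (hx.mem_Icc_zero_last _)
    rw [LMap_zero hx, hnodes, hnodes] at hfirst
    rw [LMap_last hx, hnodes, hnodes] at hlast
    simp only [Prod.fst_zero, Prod.snd_zero, mul_zero, zero_add, Prod.ext_iff] at hfirst hlast
    exact ⟨affine_eq_zero_of_two_zeros hne hfirst.1.symm hlast.1.symm u,
      affine_eq_zero_of_two_zeros hne hfirst.2.symm hlast.2.symm u⟩
  have hf₂ : EqOn (fun u => (f u).2) 0 (Icc (x 0) (x (Fin.last N))) :=
    eqOn_zero_of_apply_LMap hx hN hγ hfc.snd fun n u hu => by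
      simp [hft n u hu, (hlin n u).2]
  have hf₁ : EqOn (fun u => (f u).1) 0 (Icc (x 0) (x (Fin.last N))) :=
    eqOn_zero_of_apply_LMap hx hN hα hfc.fst fun n u hu => by
      simp [hft n u hu, (hlin n u).1, hf₂ hu]
  funext u
  by_cases hu : u ∈ Icc (x 0) (x (Fin.last N))
  · exact Prod.ext (hf₁ hu) (hf₂ hu)
  · exact hf0 u hu

theorem exists_mem_S0set_apply_nodes (y z : Fin (N + 1) → ℝ) :
    ∃ f ∈ S0set x α β γ, ∀ i, f (x i) = (y i, z i) := by
  have hne := (hx.apply_zero_lt_apply_last ⟨0, hN⟩).ne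
  let q n := lineCoeffs (x 0) (x (Fin.last N)) (z n.castSucc - γ n * z 0)
    (z n.succ - γ n * z (Fin.last N))
  obtain ⟨f₂, hf₂c, hf₂x, hf₂L⟩ := exists_fractalInterpolant hx hN hγ
    (h := fun n u => (q n).1 * u + (q n).2) (y := z) (fun n => by fun_prop) fun n =>
      ⟨by dsimp only [q]; rw [lineCoeffs_left hne]; ring,
        by dsimp only [q]; rw [lineCoeffs_right hne]; ring⟩
  let p n := lineCoeffs (x 0) (x (Fin.last N)) (y n.castSucc - α n * y 0 - β n * z 0)
    (y n.succ - α n * y (Fin.last N) - β n * z (Fin.last N))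
  obtain ⟨f₁, hf₁c, hf₁x, hf₁L⟩ := exists_fractalInterpolant hx hN hα
    (h := fun n u => β n * f₂ u + ((p n).1 * u + (p n).2))
    (y := y) (fun n => (continuousOn_const.mul hf₂c).add (by fun_prop)) fun n =>
      ⟨by dsimp only [p]; rw [hf₂x, lineCoeffs_left hne]; ring,
        by dsimp only [p]; rw [hf₂x, lineCoeffs_right hne]; ring⟩
  refine ⟨(Icc (x 0) (x (Fin.last N))).indicator fun u => (f₁ u, f₂ u),
    ⟨?_, fun u hu => indicator_of_notMem hu _, fun n => (p n, q n), fun n u hu => ?_⟩,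
    fun i => ?_⟩
  · exact (hf₁c.prodMk hf₂c).congr fun u hu => indicator_of_mem hu _
  · rw [indicator_of_mem hu, indicator_of_mem
      (Icc_castSucc_succ_subset hx n (LMap_mem_Icc hx n hu)), hf₁L n u hu, hf₂L n u hu, add_assoc]
  · rw [indicator_of_mem (hx.mem_Icc_zero_last i), hf₁x, hf₂x]

end S0

variable (x) in
def evalNodes : (ℝ → ℝ × ℝ) →ₗ[ℝ] (Fin (N + 1) → ℝ) × (Fin (N + 1) → ℝ) where
  toFun f := (fun i => (f (x i)).1, fun i => (f (x i)).2)
  map_add' _ _ := rfl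
  map_smul' _ _ := rfl

lemma evalNodes_eq_iff {f : ℝ → ℝ × ℝ} {y z : Fin (N + 1) → ℝ} :
    evalNodes x f = (y, z) ↔ ∀ i, f (x i) = (y i, z i) := by
  simp only [evalNodes, LinearMap.coe_mk, AddHom.coe_mk, funext_iff, Prod.ext_iff, forall_and]

noncomputable def S0submoduleEquiv {α β γ : Fin N → ℝ} (hx : StrictMono x) (hN : 1 ≤ N)
    (hα : ∀ n, |α n| < 1) (hγ : ∀ n, |γ n| < 1) :
    S0submodule x α β γ ≃ₗ[ℝ] (Fin (N + 1) → ℝ) × (Fin (N + 1) → ℝ) :=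
  LinearEquiv.ofBijective ((evalNodes x).domRestrict _)
    ⟨(injective_iff_map_eq_zero _).2 fun f hf =>
      Subtype.ext (eq_zero_of_mem_S0set hx hN hα hγ f.2 (evalNodes_eq_iff.1 hf)),
    fun v => by
      obtain ⟨f, hf, hnodes⟩ := exists_mem_S0set_apply_nodes hx hN hα hγ v.1 v.2
      exact ⟨⟨f, hf⟩, evalNodes_eq_iff.2 hnodes⟩⟩

theorem stmt4_general {N : ℕ} (hN : 1 ≤ N) (x : Fin (N + 1) → ℝ) (hx : StrictMono x)
    (α β γ : Fin N → ℝ) (hα : ∀ n, |α n| < 1) (hγ : ∀ n, |γ n| < 1) :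
    ∃ θ : ((Fin (N + 1) → ℝ) × (Fin (N + 1) → ℝ)) → (ℝ → ℝ × ℝ),
      (∀ (a : ℝ) (v w : (Fin (N + 1) → ℝ) × (Fin (N + 1) → ℝ)),
        θ (a • v + w) = a • θ v + θ w) ∧
      Function.Injective θ ∧
      Set.range θ = S0set x α β γ ∧
      (∀ (y z : Fin (N + 1) → ℝ) (i : Fin (N + 1)), θ (y, z) (x i) = (y i, z i)) ∧
      ∃ b : Fin (2 * (N + 1)) → (ℝ → ℝ × ℝ),
        (∀ j, b j ∈ S0set x α β γ) ∧ LinearIndependent ℝ b ∧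
        ∀ f ∈ S0set x α β γ, f ∈ Submodule.span ℝ (Set.range b) := by
  let e := S0submoduleEquiv (β := β) hx hN hα hγ
  let θ := (S0submodule x α β γ).subtype ∘ₗ e.symm.toLinearMap
  have hθinj : Function.Injective θ := Subtype.val_injective.comp e.symm.injective
  have hθrange : Set.range θ = S0set x α β γ := by
    change range (Subtype.val ∘ e.symm) = _
    rw [range_comp, e.symm.surjective.range_eq, image_univ, Subtype.range_coe]
    rfl
  have hdim : Module.finrank ℝ ((Fin (N + 1) → ℝ) × (Fin (N + 1) → ℝ)) = 2 * (N + 1) := by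
    rw [Module.finrank_prod, Module.finrank_fin_fun]
    ring
  let bD := Module.finBasisOfFinrankEq ℝ _ hdim
  refine ⟨θ, fun a v w => by simp, hθinj, hθrange,
    fun y z => evalNodes_eq_iff.1 (e.apply_symm_apply (y, z)), θ ∘ bD,
    fun j => hθrange ▸ mem_range_self _,
    bD.linearIndependent.map' θ (LinearMap.ker_eq_bot.2 hθinj), fun f hf => ?_⟩
  rw [Set.range_comp, Submodule.span_image, bD.span_eq, Submodule.map_top, LinearMap.mem_range,
    ← Set.mem_range, hθrange]
  exact hf

/-- The map `θ : ℝ^{N+1} × ℝ^{N+1} → S₀` sending `(y, z)` to `f = (f₁, f₂)`, with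
`f₁` the unique CHFIF through `(x i, y i)` and `f₂` the unique AFIF through
`(x i, z i)`, is a linear isomorphism; in particular `dim S₀ = 2(N+1)`. -/
theorem stmt4 {N : ℕ} (hN : 1 ≤ N) (x : Fin (N + 1) → ℝ) (hx : StrictMono x)
    (α β γ : Fin N → ℝ) (hα : ∀ n, |α n| < 1) (hγ : ∀ n, |γ n| < 1)
    (hβγ : ∀ n, |β n| + |γ n| < 1) :
    ∃ θ : ((Fin (N + 1) → ℝ) × (Fin (N + 1) → ℝ)) → (ℝ → ℝ × ℝ),
      (∀ (a : ℝ) (v w : (Fin (N + 1) → ℝ) × (Fin (N + 1) → ℝ)),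
        θ (a • v + w) = a • θ v + θ w) ∧
      Function.Injective θ ∧
      Set.range θ = S0set x α β γ ∧
      (∀ (y z : Fin (N + 1) → ℝ) (i : Fin (N + 1)), θ (y, z) (x i) = (y i, z i)) ∧
      ∃ b : Fin (2 * (N + 1)) → (ℝ → ℝ × ℝ),
        (∀ j, b j ∈ S0set x α β γ) ∧ LinearIndependent ℝ b ∧
        ∀ f ∈ S0set x α β γ, f ∈ Submodule.span ℝ (Set.range b) :=
  stmt4_general hN x hx α β γ hα hγ
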